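/- Let 𝒢 be a class of left R-modules closed under extensions and 𝒳 ⊆ 𝒢 a subclass. Suppose 𝒢 is left 𝒳-periodic, i.e., for every R-module M, M ∈ 𝒢 if and only if there exists a short exact sequence 0 → G → X → M → 0 with X ∈ 𝒳 and G ∈ 𝒢. Then 𝒢 is closed under cokernels of monomorphisms. -/
import Mathlib


open CategoryTheory CategoryTheory.Limits

set_option autoImplicit false

universe u

variable {R : Type u} [Ring R]

/-- A short exact sequence of `R`-modules encoded by two linear maps. -/
def IsSES {A B C : ModuleCat.{u} R} (f : A →ₗ[R] B) (g : B →ₗ[R] C) : Prop :=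
  Function.Injective f ∧ Function.Exact f g ∧ Function.Surjective g

/-- If `𝒢` is closed under extensions, `𝒳 ⊆ 𝒢` and `𝒢` is left
`𝒳`-periodic, then `𝒢` is closed under cokernels of monomorphisms. -/
theorem statement2 (𝒢 𝒳 : ModuleCat.{u} R → Prop)
    (hsub : ∀ M, 𝒳 M → 𝒢 M)
    (hext : ∀ (A B C : ModuleCat.{u} R) (f : A →ₗ[R] B) (g : B →ₗ[R] C),
      IsSES f g → 𝒢 A → 𝒢 C → 𝒢 B)
    (hper : ∀ M : ModuleCat.{u} R, 𝒢 M ↔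
      ∃ (G X : ModuleCat.{u} R) (f : G →ₗ[R] X) (g : X →ₗ[R] M), 𝒳 X ∧ 𝒢 G ∧ IsSES f g)
    {M N L : ModuleCat.{u} R} (f : M →ₗ[R] N) (g : N →ₗ[R] L)
    (hses : IsSES f g) (hM : 𝒢 M) (hN : 𝒢 N) : 𝒢 L := by
  obtain ⟨finj, fg, gsurj⟩ := hses
  obtain ⟨G, X, q', q, hX, hG, hq'inj, hq'q, hqsurj⟩ := (hper N).mp hN
  -- K = q⁻¹(im f) as a submodule of X
  set K : Submodule R X := Submodule.comap q (LinearMap.range f) with hKdef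
  let Kc : ModuleCat.{u} R := ModuleCat.of R K
  -- the map G → K induced by q'
  have hq'mem : ∀ x : G, q' x ∈ K := by
    intro x
    have : q (q' x) = 0 := (hq'q (q' x)).mpr ⟨x, rfl⟩
    simp [hKdef, Submodule.mem_comap, this]
  let ι : G →ₗ[R] Kc := LinearMap.codRestrict K q' hq'mem
  -- the map K → M
  let e : M ≃ₗ[R] LinearMap.range f := LinearEquiv.ofInjective f finj
  have hqres : ∀ x ∈ K, q x ∈ LinearMap.range f := fun x hx => hx
  let qres : Kc →ₗ[R] LinearMap.range f := q.restrict hqres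
  let π : Kc →ₗ[R] M := e.symm.toLinearMap ∘ₗ qres
  have hπval : ∀ k : Kc, f (π k) = q k.1 := by
    intro k
    have : (e (π k) : N) = q k.1 := by
      show ((e (e.symm (qres k)) : LinearMap.range f) : N) = q k.1
      rw [e.apply_symm_apply]
      rfl
    simpa [e, LinearEquiv.ofInjective_apply] using this
  have hSES1 : IsSES ι π := by
    refine ⟨?_, ?_, ?_⟩
    · intro a b h
      exact hq'inj (congrArg Subtype.val h)
    · intro k
      constructor
      · intro hk
        have h0 : q k.1 = 0 := by rw [← hπval k, hk, map_zero]
        obtain ⟨a, ha⟩ := (hq'q k.1).mp h0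
        exact ⟨a, Subtype.ext ha⟩
      · rintro ⟨a, rfl⟩
        have h0 : q (q' a) = 0 := (hq'q (q' a)).mpr ⟨a, rfl⟩
        apply finj
        rw [map_zero, hπval (ι a)]
        exact h0
    · intro m
      obtain ⟨x, hx⟩ := hqsurj (f m)
      have hxK : x ∈ K := by
        simp [hKdef, Submodule.mem_comap, hx]
      refine ⟨⟨x, hxK⟩, ?_⟩
      apply finj
      rw [hπval ⟨x, hxK⟩, hx]
  have hKin : 𝒢 Kc := hext G Kc M ι π hSES1 hG hM
  -- second SES : 0 → K → X → L → 0
  let ι2 : Kc →ₗ[R] X := K.subtype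
  let g2 : X →ₗ[R] L := g ∘ₗ q
  have hSES2 : IsSES ι2 g2 := by
    refine ⟨Subtype.val_injective, ?_, gsurj.comp hqsurj⟩
    intro x
    constructor
    · intro hx
      have : q x ∈ LinearMap.range f := by
        obtain ⟨m, hm⟩ := (fg (q x)).mp hx
        exact ⟨m, hm⟩
      exact ⟨⟨x, this⟩, rfl⟩
    · rintro ⟨⟨y, hy⟩, rfl⟩
      obtain ⟨m, hm⟩ := hy
      exact (fg (q y)).mpr ⟨m, hm⟩
  exact (hper L).mpr ⟨Kc, X, ι2, g2, hX, hKin, hSES2⟩
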